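/- Fix a function b : ℕ → ℕ with b(n) ≥ 1 and b(n) = o(n), and a function a : ℕ → ℕ with a(n) = o(n / b(n)). Then for all sufficiently large n, there is no (a(n), b(n))-BAPO that solves Match3_n over (Z_{n²})^n. -/

import Mathlib

/-!
Take `N = a + 1` queries: the last token is `-tᵢ`, and for `R ⊆ Fin N` the prefix holds
`tᵢ - wᵢ` at position `i` and, at a toggle position `qᵢ`, the small value `wᵢ` if `i ∈ R`.
All other prefix values are small, and the targets are placed so that two prefix values sum
to `tᵢ` only as `(tᵢ - wᵢ) + wᵢ`; hence Match3 with query `i` answers `i ∈ R`. Among the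
`2 ^ N > 2 ^ a` prefixes two, `R ≠ R'`, share the prefix-oracle output, and for `i ∈ R ∆ R'`
the suffix oracle must also receive the same attended set. This is arranged greedily: each
query in turn claims `b` free positions it attends with some small value, and these are
identical in all prefixes; a query that cannot do so attends no small value at the remaining
free positions, which is where the toggles go, so its candidate set does not depend on `R`.
This needs about `a b` positions and `a² b` residues, which `a = o(n / b)` and `b = o(n)`
provide.
-/

open Finset Filter Asymptotics

/-- An `(a, b)`-BAPO (bounded attention prefix oracle): a prefix oracle `f` outputting
`a` bits, a binary attention function `g`, and a suffix oracle `h` that receives the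
prefix-oracle output, an attended set of at most `b` (token, 1-based index) pairs from
the prefix, the suffix, and the split index. -/
structure BAPO (Sigma : Type) (Out : Type) (a b : ℕ) where
  f : List Sigma → (Fin a → Bool)
  g : List Sigma → ℕ → Sigma → ℕ → Bool
  h : (Fin a → Bool) → Finset (Sigma × ℕ) → List Sigma → ℕ → Out

namespace BAPO

variable {Sigma Out : Type} {a b : ℕ}

/-- The set `𝔾 = {(xᵢ, i) : 1 ≤ i ≤ k, g(suffix, k, xᵢ, i) = 1}` of attended
candidates for a given prefix and suffix. -/
noncomputable def cands (M : BAPO Sigma Out a b) (pre suf : List Sigma) :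
    Finset (Sigma × ℕ) :=
  letI := Classical.decEq Sigma
  (Finset.univ.filter fun i : Fin pre.length =>
      M.g suf pre.length (pre.get i) ((i : ℕ) + 1) = true).image
    fun i => (pre.get i, (i : ℕ) + 1)

/-- The BAPO outputs `y` on input `x`: for every split index `k < |x|` and every
attended set `G ⊆ 𝔾` with `|G| = min b |𝔾|`, the suffix oracle outputs `y`. -/
def SolvesOn (M : BAPO Sigma Out a b) (x : List Sigma) (y : Out) : Prop :=
  ∀ k, k < x.length →
    ∀ G : Finset (Sigma × ℕ), G ⊆ M.cands (x.take k) (x.drop k) →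
      G.card = min b (M.cands (x.take k) (x.drop k)).card →
      M.h (M.f (x.take k)) G (x.drop k) k = y

/-- The BAPO outputs a *correct* answer (one satisfying `good`) on input `x`:
for every split index `k < |x|` and every attended set `G ⊆ 𝔾` with
`|G| = min b |𝔾|`, the suffix oracle's output satisfies `good`. -/
def SolvesOnP (M : BAPO Sigma Out a b) (x : List Sigma) (good : Out → Prop) : Prop :=
  ∀ k, k < x.length →
    ∀ G : Finset (Sigma × ℕ), G ⊆ M.cands (x.take k) (x.drop k) →
      G.card = min b (M.cands (x.take k) (x.drop k)).card →
      good (M.h (M.f (x.take k)) G (x.drop k) k)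

end BAPO

namespace BAPO

variable {Sigma Out : Type} {a b : ℕ}

theorem cands_ofFn [DecidableEq Sigma] (M : BAPO Sigma Out a b) {k : ℕ}
    (v : Fin k → Sigma) (suf : List Sigma) :
    M.cands (List.ofFn v) suf =
      ({p | M.g suf k (v p) (p + 1) = true} : Finset (Fin k)).image
        fun p => (v p, (p : ℕ) + 1) := by
  ext e
  simp only [cands, Finset.mem_image, Finset.mem_filter, Finset.mem_univ, true_and,
    List.length_ofFn, List.get_eq_getElem, List.getElem_ofFn]
  exact ⟨fun ⟨p, hp, he⟩ => ⟨Fin.cast (List.length_ofFn) p, hp, he⟩,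
    fun ⟨p, hp, he⟩ => ⟨Fin.cast (List.length_ofFn).symm p, hp, he⟩⟩

theorem cands_ofFn_congr (M : BAPO Sigma Out a b) {k : ℕ} {v v' : Fin k → Sigma}
    {suf : List Sigma}
    (h : ∀ p, v p = v' p ∨ (M.g suf k (v p) (p + 1) = false ∧ M.g suf k (v' p) (p + 1) = false)) :
    M.cands (List.ofFn v) suf = M.cands (List.ofFn v') suf := by
  classical
  simp only [cands_ofFn]
  ext e
  simp only [Finset.mem_image, Finset.mem_filter, Finset.mem_univ, true_and]
  constructor <;> rintro ⟨p, hp, rfl⟩ <;> rcases h p with hv | ⟨h1, h2⟩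
  · exact ⟨p, hv ▸ hp, hv ▸ rfl⟩
  · simp_all
  · exact ⟨p, hv.symm ▸ hp, hv.symm ▸ rfl⟩
  · simp_all

def ShareAttendedSet {α : Type*} (b : ℕ) (C C' : Finset α) : Prop :=
  ∃ G ⊆ C, G.card = min b C.card ∧ G ⊆ C' ∧ G.card = min b C'.card

theorem shareAttendedSet_self {α : Type*} (b : ℕ) (C : Finset α) : ShareAttendedSet b C C := by
  obtain ⟨G, hG, hcard⟩ := Finset.exists_subset_card_eq (min_le_right b C.card)
  exact ⟨G, hG, hcard, hG, hcard⟩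

theorem shareAttendedSet_of_subset {α : Type*} {b : ℕ} {C C' G : Finset α} (hC : G ⊆ C)
    (hC' : G ⊆ C') (hG : G.card = b) : ShareAttendedSet b C C' :=
  ⟨G, hC, by rw [min_eq_left (hG ▸ Finset.card_le_card hC), hG], hC',
    by rw [min_eq_left (hG ▸ Finset.card_le_card hC'), hG]⟩

theorem SolvesOn.eq_of_shareAttendedSet {M : BAPO Sigma Out a b} {pre pre' suf : List Sigma}
    {y y' : Out} (hsuf : suf ≠ []) (hlen : pre.length = pre'.length) (hf : M.f pre = M.f pre')
    (hshare : ShareAttendedSet b (M.cands pre suf) (M.cands pre' suf))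
    (h : M.SolvesOn (pre ++ suf) y) (h' : M.SolvesOn (pre' ++ suf) y') : y = y' := by
  obtain ⟨G, hG, hGcard, hG', hGcard'⟩ := hshare
  have hlt : ∀ l : List Sigma, l.length < (l ++ suf).length := fun l => by
    simpa using List.length_pos_iff.mpr hsuf
  have hy := h pre.length (hlt pre) G
  have hy' := h' pre'.length (hlt pre') G
  simp only [List.take_left', List.drop_left'] at hy hy'
  rw [← hy hG hGcard, ← hy' hG' hGcard', hf, hlen]

theorem not_forall_solvesOn_of_fooling {ι : Type*} [Fintype ι] [DecidableEq ι]
    (M : BAPO Sigma Bool a b) (pre : Finset ι → List Sigma) (s : ι → Sigma)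
    (hlen : ∀ R R', (pre R).length = (pre R').length)
    (hshare : ∀ R R' i, ShareAttendedSet b (M.cands (pre R) [s i]) (M.cands (pre R') [s i]))
    (ha : a < Fintype.card ι) :
    ¬ ∀ R i, M.SolvesOn (pre R ++ [s i]) (decide (i ∈ R)) := by
  intro hsolve
  have hcard : Fintype.card (Fin a → Bool) < Fintype.card (Finset ι) := by
    simpa [Fintype.card_finset] using Nat.pow_lt_pow_right (by norm_num) ha
  obtain ⟨R, R', hne, hf⟩ := Fintype.exists_ne_map_eq_of_card_lt (fun R => M.f (pre R)) hcard
  obtain ⟨i, hi⟩ : ∃ i, ¬ (i ∈ R ↔ i ∈ R') := by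
    by_contra! h
    exact hne (Finset.ext h)
  exact hi (decide_eq_decide.mp <| (hsolve R i).eq_of_shareAttendedSet (List.cons_ne_nil _ _)
    (hlen R R') hf (hshare R R' i) (hsolve R' i))

end BAPO

section Claims

open Function

variable {ι α : Type*}

theorem Finset.exists_injective_mem {s : Finset α} {N : ℕ} (h : N ≤ s.card) :
    ∃ f : Fin N → α, Injective f ∧ ∀ j, f j ∈ s := by
  obtain ⟨f⟩ : Nonempty (Fin N ↪ s) := Embedding.nonempty_of_card_le (by simpa using h)
  exact ⟨fun j => f j, fun _ _ hj => f.injective (Subtype.ext hj), fun j => (f j).2⟩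

theorem pairwise_disjoint_update [DecidableEq ι] {Z : ι → Finset α}
    (hZ : Pairwise (Disjoint on Z)) {a : ι} {Y : Finset α} (hY : ∀ i ≠ a, Disjoint Y (Z i)) :
    Pairwise (Disjoint on update Z a Y) := by
  intro i j hij
  simp only [onFun]
  by_cases hi : i = a <;> by_cases hj : j = a
  · exact absurd (hi.trans hj.symm) hij
  · subst hi; simpa [hj] using hY j hj
  · subst hj; simpa [hi] using (hY i hi).symm
  · simpa [hi, hj] using hZ hij

/-- Greedily, each `i` claims `b` fresh elements of `T i`, or else all fresh elements it has. -/
theorem exists_disjoint_subsets_card_eq_or_covered [Fintype ι] [DecidableEq α]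
    (T : ι → Finset α) (b : ℕ) :
    ∃ Z : ι → Finset α, Pairwise (Disjoint on Z) ∧
      ∀ i, Z i ⊆ T i ∧ (Z i).card ≤ b ∧ ((Z i).card = b ∨ T i ⊆ Finset.univ.biUnion Z) := by
  classical
  suffices ∀ S : Finset ι, ∃ Z : ι → Finset α, Pairwise (Disjoint on Z) ∧ (∀ i ∉ S, Z i = ∅) ∧
      ∀ i, Z i ⊆ T i ∧ (Z i).card ≤ b ∧ (i ∈ S → (Z i).card = b ∨ T i ⊆ S.biUnion Z) by
    obtain ⟨Z, hdisj, -, hZ⟩ := this Finset.univ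
    exact ⟨Z, hdisj, fun i => ⟨(hZ i).1, (hZ i).2.1, (hZ i).2.2 (Finset.mem_univ i)⟩⟩
  intro S
  induction S using Finset.induction_on with
  | empty => exact ⟨fun _ => ∅, fun _ _ _ => disjoint_bot_left, fun _ _ => rfl, fun _ => by simp⟩
  | @insert a S ha ih =>
    obtain ⟨Z, hdisj, hout, hZ⟩ := ih
    set C := S.biUnion Z
    obtain ⟨Y, hYF, hYcard⟩ := Finset.exists_subset_card_eq (min_le_right b (T a \ C).card)
    have hYdisj : ∀ i ≠ a, Disjoint Y (Z i) := by
      intro i hi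
      by_cases hiS : i ∈ S
      · exact Finset.disjoint_of_subset_left hYF <| Finset.disjoint_of_subset_right
          (Finset.subset_biUnion_of_mem Z hiS) Finset.sdiff_disjoint
      · rw [hout i hiS]; exact Finset.disjoint_empty_right Y
    have hunion : (insert a S).biUnion (update Z a Y) = Y ∪ C := by
      rw [Finset.biUnion_insert, update_self]
      exact congrArg _ <| Finset.biUnion_congr rfl fun i hi =>
        update_of_ne (ne_of_mem_of_not_mem hi ha) _ _
    refine ⟨update Z a Y, pairwise_disjoint_update hdisj hYdisj, fun i hi => ?_, fun i => ?_⟩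
    · rw [Finset.mem_insert, not_or] at hi
      rw [update_of_ne hi.1, hout i hi.2]
    rw [hunion]
    by_cases hi : i = a
    · subst hi
      refine ⟨by simpa using hYF.trans Finset.sdiff_subset, by simp [hYcard], fun _ => ?_⟩
      rw [update_self]
      rcases le_total b (T i \ C).card with hb | hb
      · exact Or.inl (hYcard.trans (min_eq_left hb))
      · have hYeq : Y = T i \ C :=
          Finset.eq_of_subset_of_card_le hYF (hYcard ▸ (min_eq_right hb).ge)
        rw [hYeq, Finset.sdiff_union_self_eq_union]
        exact Or.inr Finset.subset_union_left
    · rw [update_of_ne hi]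
      refine ⟨(hZ i).1, (hZ i).2.1, fun hiS => ?_⟩
      exact ((hZ i).2.2 ((Finset.mem_insert.mp hiS).resolve_left hi)).imp_right
        fun h => h.trans Finset.subset_union_right

theorem exists_eq_on_pairwise_disjoint {β : Type*} {Z : ι → Finset α}
    (hZ : Pairwise (Disjoint on Z)) (c : ι → α → β) (d : β) :
    ∃ f : α → β, (∀ i, ∀ z ∈ Z i, f z = c i z) ∧ ∀ z, (∀ i, z ∉ Z i) → f z = d := by
  classical
  refine ⟨fun z => if h : ∃ i, z ∈ Z i then c h.choose z else d, fun i z hz => ?_,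
    fun z hz => dif_neg fun ⟨i, hi⟩ => hz i hi⟩
  have h : ∃ i, z ∈ Z i := ⟨i, hz⟩
  have hi : h.choose = i := by
    by_contra hne
    exact Finset.disjoint_left.mp (hZ hne) h.choose_spec hz
  simp only [dif_pos h, hi]

theorem exists_attended_claims [Fintype ι] [DecidableEq α] {β : Type*} (att : ι → β → α → Prop)
    (zone : Finset α) {V : Set β} {d : β} (hd : d ∈ V) (b : ℕ) :
    ∃ (C : Finset α) (cv : α → β), C ⊆ zone ∧ C.card ≤ Fintype.card ι * b ∧ (∀ z, cv z ∈ V) ∧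
      (∀ z ∉ C, cv z = d) ∧ ∀ i, (∃ Y ⊆ C, Y.card = b ∧ ∀ z ∈ Y, att i (cv z) z) ∨
        ∀ z ∈ zone \ C, ∀ v ∈ V, ¬ att i v z := by
  classical
  let T i := zone.filter fun z => ∃ v ∈ V, att i v z
  obtain ⟨Z, hdisj, hZ⟩ := exists_disjoint_subsets_card_eq_or_covered T b
  have hchoice : ∀ i z, ∃ v ∈ V, z ∈ T i → att i v z := by
    intro i z
    by_cases hz : z ∈ T i
    · obtain ⟨v, hv, hatt⟩ := (Finset.mem_filter.mp hz).2
      exact ⟨v, hv, fun _ => hatt⟩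
    · exact ⟨d, hd, fun h => absurd h hz⟩
  choose c hcV hcatt using hchoice
  obtain ⟨cv, hcv, hcv_out⟩ := exists_eq_on_pairwise_disjoint hdisj c d
  have hZC : ∀ i, Z i ⊆ Finset.univ.biUnion Z := fun i =>
    Finset.subset_biUnion_of_mem Z (Finset.mem_univ i)
  refine ⟨Finset.univ.biUnion Z, cv, Finset.biUnion_subset.mpr fun i _ =>
      (hZ i).1.trans (Finset.filter_subset _ _), ?_, fun z => ?_, fun z hz => ?_, fun i => ?_⟩
  · refine Finset.card_biUnion_le.trans ?_
    simpa using Finset.sum_le_sum fun i (_ : i ∈ Finset.univ) => (hZ i).2.1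
  · by_cases hz : ∃ i, z ∈ Z i
    · obtain ⟨i, hi⟩ := hz
      exact hcv i z hi ▸ hcV i z
    · exact (hcv_out z (not_exists.mp hz)).symm ▸ hd
  · exact hcv_out z fun i hi => hz (hZC i hi)
  rcases (hZ i).2.2 with hcard | hcover
  · exact Or.inl ⟨Z i, hZC i, hcard, fun z hz => hcv i z hz ▸ hcatt i z ((hZ i).1 hz)⟩
  · refine Or.inr fun z hz v hv hatt => (Finset.mem_sdiff.mp hz).2 (hcover ?_)
    exact Finset.mem_filter.mpr ⟨(Finset.mem_sdiff.mp hz).1, v, hv, hatt⟩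

end Claims

section Targets

variable {P N : ℕ}

/-- Query `i` is the token `-target P N i`. Targets exceed `2 * P` and are `P` apart, so a value
below `P` plus a complement `target j - w j` (with `w j < P`) can only hit `target j`. -/
def target (P N : ℕ) (i : Fin N) : ℕ := P * (N + 2 + i)

theorem target_bounds (i : Fin N) :
    P * (N + 1) + P ≤ target P N i ∧ target P N i + P ≤ 2 * (P * (N + 1)) := by
  have hi := i.isLt
  constructor <;> unfold target
  · nlinarith
  · nlinarith

theorem two_mul_le_target (i : Fin N) : 2 * P ≤ target P N i := by
  unfold target
  nlinarith

theorem target_add_le {i j : Fin N} (hij : i < j) : target P N i + P ≤ target P N j := by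
  have : (i : ℕ) + 1 ≤ j := hij
  unfold target
  nlinarith

variable {w : Fin N → ℕ}

theorem eq_of_lt_add_target_sub_eq_target (hw : ∀ j, w j < P) {x : ℕ} {i j : Fin N}
    (hx : x < P) (h : x + (target P N j - w j) = target P N i) : j = i ∧ x = w j := by
  have hj := (target_bounds (P := P) j).1
  have hwj := hw j
  rcases lt_trichotomy i j with hij | rfl | hji
  · have := target_add_le (P := P) hij; omega
  · omega
  · have := target_add_le (P := P) hji; omega

def IsLayoutValue (P N : ℕ) (w : Fin N → ℕ) (x : ℕ) : Prop :=
  x < P ∨ ∃ j, x = target P N j - w j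

theorem IsLayoutValue.add_le {x : ℕ} (hx : IsLayoutValue P N w x) :
    x + P ≤ 2 * (P * (N + 1)) := by
  have : P ≤ P * (N + 1) := Nat.le_mul_of_pos_right P N.succ_pos
  rcases hx with hx | ⟨j, rfl⟩
  · omega
  · have := target_bounds (P := P) j; omega

theorem eq_or_eq_of_add_eq_target (hw : ∀ j, w j < P) {x y : ℕ} (hx : IsLayoutValue P N w x)
    (hy : IsLayoutValue P N w y) {i : Fin N} (h : x + y = target P N i) : x = w i ∨ y = w i := by
  have hi := target_bounds (P := P) i
  rcases hx with hx | ⟨j, rfl⟩ <;> rcases hy with hy | ⟨l, rfl⟩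
  · omega
  · obtain ⟨rfl, hx⟩ := eq_of_lt_add_target_sub_eq_target hw hx h
    exact Or.inl hx
  · obtain ⟨rfl, hy⟩ := eq_of_lt_add_target_sub_eq_target hw hy
      (show y + (target P N j - w j) = target P N i by omega)
    exact Or.inr hy
  · have := (target_bounds (P := P) j).1
    have := (target_bounds (P := P) l).1
    have := hw j
    have := hw l
    omega

theorem IsLayoutValue.ne_two_mul_target (hw : ∀ j, w j < P) {x : ℕ}
    (hx : IsLayoutValue P N w x) (i : Fin N) : x ≠ 2 * target P N i := by
  have := hx.add_le
  have := hw i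
  have := (target_bounds (P := P) i).1
  omega

theorem ZMod.natCast_eq_natCast_iff_of_lt {m a b : ℕ} (ha : a < m) (hb : b < m) :
    (a : ZMod m) = b ↔ a = b := by
  rw [ZMod.natCast_eq_natCast_iff', Nat.mod_eq_of_lt ha, Nat.mod_eq_of_lt hb]

/-- Triples using the last token more than once would need the prefix value `2 * target P N i`
or `3 * target P N i ≡ 0`; both are ruled out by size. -/
theorem exists_add_add_eq_zero_iff {m k : ℕ} (hm : 6 * (P * (N + 1)) ≤ m) (hw : ∀ j, w j < P)
    {v : Fin k → ℕ} (hv : ∀ p, IsLayoutValue P N w (v p)) {i : Fin N} {x : Fin (k + 1) → ZMod m}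
    (hx : ∀ p, x p.castSucc = v p) (hlast : x (Fin.last k) = -(target P N i : ZMod m)) :
    (∃ a b, x (Fin.last k) + x a + x b = 0) ↔ ∃ a b, v a + v b = target P N i := by
  have hi := target_bounds (P := P) i
  have hP := hw i
  have hlt : ∀ p, v p + P ≤ m := fun p => by have := (hv p).add_le; omega
  have hpair : ∀ a b, -(target P N i : ZMod m) + v a + v b = 0 ↔ v a + v b = target P N i := by
    intro a b
    rw [← ZMod.natCast_eq_natCast_iff_of_lt (m := m)
      (by have := (hv a).add_le; have := (hv b).add_le; omega) (by omega)]
    push_cast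
    constructor <;> intro h <;> linear_combination h
  have hdouble : ∀ a, (v a : ZMod m) ≠ 2 * target P N i := fun a h =>
    (hv a).ne_two_mul_target hw i <|
      (ZMod.natCast_eq_natCast_iff_of_lt (m := m) (a := v a) (b := 2 * target P N i)
        (by have := hlt a; omega) (by omega)).mp (by exact_mod_cast h)
  have htriple : 3 * (target P N i : ZMod m) ≠ 0 := fun h => by
    have : 3 * target P N i = 0 :=
      (ZMod.natCast_eq_natCast_iff_of_lt (m := m) (by omega) (by omega)).mp (by exact_mod_cast h)
    omega
  simp only [Fin.exists_fin_succ', hx, hlast, hpair]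
  constructor
  · rintro ((⟨a, ⟨b, h⟩ | h⟩) | ⟨a, h⟩ | h)
    · exact ⟨a, b, h⟩
    · exact absurd (by linear_combination h) (hdouble a)
    · exact absurd (by linear_combination h) (hdouble a)
    · exact absurd (by linear_combination -h) htriple
  · rintro ⟨a, b, h⟩
    exact Or.inl ⟨a, Or.inl ⟨b, h⟩⟩

end Targets

/-- Toggle values `w`, toggle positions `q` and the values `cv` of the remaining positions
`≥ N` of a family of prefixes of length `k`; positions `p < N` carry `target p - w p`. -/
structure Layout (N P k : ℕ) where
  w : Fin N → ℕ
  q : Fin N → ℕ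
  cv : ℕ → ℕ
  w_lt : ∀ j, w j < P
  w_ne_zero : ∀ j, w j ≠ 0
  w_injective : Function.Injective w
  q_injective : Function.Injective q
  q_mem : ∀ j, q j ∈ Finset.Ico N k
  cv_lt : ∀ z, cv z < P
  cv_ne_w : ∀ z j, cv z ≠ w j

namespace Layout

variable {N P k m A B : ℕ}

noncomputable def pre (L : Layout N P k) (R : Finset (Fin N)) : ℕ → ℕ :=
  Function.extend L.q (fun j => if j ∈ R then L.w j else 0)
    fun p => if h : p < N then target P N ⟨p, h⟩ - L.w ⟨p, h⟩ else L.cv p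

variable {L : Layout N P k}

theorem pre_q (R : Finset (Fin N)) (j : Fin N) :
    L.pre R (L.q j) = if j ∈ R then L.w j else 0 :=
  L.q_injective.extend_apply _ _ _

theorem pre_of_lt (R : Finset (Fin N)) {p : ℕ} (hp : p < N) :
    L.pre R p = target P N ⟨p, hp⟩ - L.w ⟨p, hp⟩ := by
  rw [pre, Function.extend_apply' _ _ _ ?_, dif_pos hp]
  rintro ⟨j, rfl⟩
  have := (Finset.mem_Ico.mp (L.q_mem j)).1
  omega

theorem pre_of_le (R : Finset (Fin N)) {p : ℕ} (hp : N ≤ p) (hq : ∀ j, L.q j ≠ p) :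
    L.pre R p = L.cv p := by
  rw [pre, Function.extend_apply' _ _ _ fun ⟨j, hj⟩ => hq j hj, dif_neg (by omega)]

theorem pre_eq_of_forall_q_ne (R R' : Finset (Fin N)) {p : ℕ} (hq : ∀ j, L.q j ≠ p) :
    L.pre R p = L.pre R' p := by
  simp only [pre, Function.extend_apply' _ _ _ fun ⟨j, hj⟩ => hq j hj]

theorem isLayoutValue_pre (R : Finset (Fin N)) (p : ℕ) : IsLayoutValue P N L.w (L.pre R p) := by
  by_cases hq : ∃ j, L.q j = p
  · obtain ⟨j, rfl⟩ := hq
    rw [pre_q]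
    have := L.w_lt j
    split_ifs <;> left <;> omega
  · simp only [not_exists] at hq
    by_cases hp : p < N
    · exact Or.inr ⟨_, pre_of_lt R hp⟩
    · exact Or.inl (pre_of_le R (by omega) hq ▸ L.cv_lt p)

theorem exists_pre_eq_w_iff (R : Finset (Fin N)) (i : Fin N) :
    (∃ p : Fin k, L.pre R p = L.w i) ↔ i ∈ R := by
  constructor
  · rintro ⟨p, hp⟩
    by_cases hq : ∃ j, L.q j = p
    · obtain ⟨j, hj⟩ := hq
      rw [← hj, pre_q] at hp
      split_ifs at hp with hjR
      · exact L.w_injective hp ▸ hjR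
      · exact absurd hp.symm (L.w_ne_zero i)
    · simp only [not_exists] at hq
      by_cases hpN : (p : ℕ) < N
      · have := two_mul_le_target (P := P) ⟨p, hpN⟩
        have := L.w_lt i
        have := L.w_lt ⟨p, hpN⟩
        rw [pre_of_lt R hpN] at hp
        omega
      · exact absurd (pre_of_le R (by omega) hq ▸ hp) (L.cv_ne_w p i)
  · intro hi
    exact ⟨⟨L.q i, (Finset.mem_Ico.mp (L.q_mem i)).2⟩, by simp [pre_q, hi]⟩

theorem exists_add_eq_target_iff (R : Finset (Fin N)) (i : Fin N) :
    (∃ a b : Fin k, L.pre R a + L.pre R b = target P N i) ↔ i ∈ R := by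
  rw [← exists_pre_eq_w_iff]
  constructor
  · rintro ⟨a, b, h⟩
    rcases eq_or_eq_of_add_eq_target L.w_lt (isLayoutValue_pre R a) (isLayoutValue_pre R b) h
      with h | h
    exacts [⟨a, h⟩, ⟨b, h⟩]
  · rintro ⟨b, hb⟩
    have hk : (i : ℕ) < k := by have := Finset.mem_Ico.mp (L.q_mem i); omega
    refine ⟨⟨i, hk⟩, b, ?_⟩
    have := two_mul_le_target (P := P) i
    have := L.w_lt i
    rw [hb, pre_of_lt R i.isLt, Fin.eta]
    omega

/-- Either `B` positions attended by query `i` carry the same value in every prefix, or query `i`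
attends no value below `P` at any toggle position. -/
def Fools (L : Layout N P k) (M : BAPO (ZMod m) Bool A B) (i : Fin N) : Prop :=
  (∃ Y : Finset ℕ, Y.card = B ∧ ∀ z ∈ Y, z ∈ Finset.Ico N k ∧ (∀ j, L.q j ≠ z) ∧
      M.g [-(target P N i : ZMod m)] k (L.cv z) (z + 1) = true) ∨
    ∀ j, ∀ v < P, M.g [-(target P N i : ZMod m)] k (v : ZMod m) (L.q j + 1) = false

theorem shareAttendedSet_of_fools {M : BAPO (ZMod m) Bool A B} {i : Fin N}
    (hi : L.Fools M i) (R R' : Finset (Fin N)) :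
    BAPO.ShareAttendedSet B
      (M.cands (List.ofFn fun p : Fin k => (L.pre R p : ZMod m)) [-(target P N i : ZMod m)])
      (M.cands (List.ofFn fun p : Fin k => (L.pre R' p : ZMod m)) [-(target P N i : ZMod m)]) := by
  classical
  rcases hi with ⟨Y, hYcard, hY⟩ | hdark
  · have hsub : ∀ R, Y.image (fun z => ((L.cv z : ZMod m), z + 1)) ⊆
        M.cands (List.ofFn fun p : Fin k => (L.pre R p : ZMod m)) [-(target P N i : ZMod m)] := by
      intro R e he
      obtain ⟨z, hz, rfl⟩ := Finset.mem_image.mp he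
      obtain ⟨hzk, hzq, hg⟩ := hY z hz
      obtain ⟨hNz, hzk⟩ := Finset.mem_Ico.mp hzk
      rw [BAPO.cands_ofFn]
      refine Finset.mem_image.mpr ⟨⟨z, hzk⟩, ?_, ?_⟩ <;>
        simp only [pre_of_le R hNz hzq, Finset.mem_filter, Finset.mem_univ, true_and, hg]
    refine BAPO.shareAttendedSet_of_subset (hsub R) (hsub R') ?_
    rw [Finset.card_image_of_injective _ fun z z' h => by simpa using congrArg Prod.snd h, hYcard]
  · rw [M.cands_ofFn_congr fun p => ?_]
    · exact BAPO.shareAttendedSet_self B _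
    by_cases hq : ∃ j, L.q j = p
    · obtain ⟨j, hj⟩ := hq
      have hpre : ∀ R, L.pre R p < P := fun R => by
        rw [← hj, pre_q]
        have := L.w_lt j
        split_ifs <;> omega
      simp only [← hj] at hpre ⊢
      exact Or.inr ⟨hdark j _ (hpre R), hdark j _ (hpre R')⟩
    · simp only [not_exists] at hq
      exact Or.inl (congrArg _ (pre_eq_of_forall_q_ne R R' hq))

theorem exists_forall_fools (M : BAPO (ZMod m) Bool A B) (hk : N * (B + 2) ≤ k)
    (hP : N * (B + 1) < P) : ∃ L : Layout N P k, ∀ i, L.Fools M i := by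
  obtain ⟨C, cv, hCzone, hC, hcvP, hcv0, hclaims⟩ := exists_attended_claims
    (fun i (v z : ℕ) => M.g [-(target P N i : ZMod m)] k (v : ZMod m) (z + 1) = true)
    (Finset.Ico N k) (V := {v | v < P}) (show 0 < P by omega) B
  have hNB : N * (B + 2) = N * B + 2 * N := by ring
  have hNB' : N * (B + 1) = N * B + N := by ring
  simp only [Fintype.card_fin] at hC
  obtain ⟨q, hq_inj, hq⟩ := Finset.exists_injective_mem (s := Finset.Ico N k \ C) (N := N) <| by
    have := Finset.le_card_sdiff C (Finset.Ico N k)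
    simp only [Nat.card_Ico] at this
    omega
  obtain ⟨w, hw_inj, hw⟩ :=
    Finset.exists_injective_mem (s := Finset.range P \ insert 0 (C.image cv)) (N := N) <| by
      have := Finset.le_card_sdiff (insert 0 (C.image cv)) (Finset.range P)
      have := Finset.card_insert_le 0 (C.image cv)
      have := Finset.card_image_le (s := C) (f := cv)
      simp only [Finset.card_range] at *
      omega
  have hcv_mem : ∀ z, cv z ∈ insert 0 (C.image cv) := by
    intro z
    by_cases hz : z ∈ C
    · exact Finset.mem_insert_of_mem (Finset.mem_image_of_mem cv hz)
    · rw [hcv0 z hz]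
      exact Finset.mem_insert_self 0 _
  refine ⟨⟨w, q, cv, fun j => ?_, fun j h => ?_, hw_inj, hq_inj,
    fun j => (Finset.mem_sdiff.mp (hq j)).1, hcvP,
    fun z j h => (Finset.mem_sdiff.mp (hw j)).2 (h ▸ hcv_mem z)⟩, fun i => ?_⟩
  · exact Finset.mem_range.mp (Finset.mem_sdiff.mp (hw j)).1
  · exact (Finset.mem_sdiff.mp (hw j)).2 (by rw [h]; exact Finset.mem_insert_self 0 _)
  rcases hclaims i with ⟨Y, hYC, hYcard, hY⟩ | hdark
  · refine Or.inl ⟨Y, hYcard, fun z hz => ⟨hCzone (hYC hz), fun j hj => ?_, hY z hz⟩⟩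
    exact (Finset.mem_sdiff.mp (hq j)).2 (by dsimp only at hj; rw [hj]; exact hYC hz)
  · exact Or.inr fun j v hv => Bool.eq_false_iff.mpr (hdark (q j) (hq j) v hv)

end Layout

theorem BAPO.not_solvesOn_match3 {m A B N P k : ℕ} (hA : A < N) (hk : N * (B + 2) ≤ k)
    (hP : N * (B + 1) < P) (hm : 6 * (P * (N + 1)) ≤ m) (M : BAPO (ZMod m) Bool A B) :
    ¬ ∀ x : Fin (k + 1) → ZMod m,
      M.SolvesOn (List.ofFn x) (decide (∃ i j, x (Fin.last k) + x i + x j = 0)) := by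
  intro hM
  obtain ⟨L, hL⟩ := Layout.exists_forall_fools M hk hP
  refine M.not_forall_solvesOn_of_fooling (fun R => List.ofFn fun p : Fin k => (L.pre R p : ZMod m))
    (fun i => -(target P N i : ZMod m)) (fun _ _ => by simp)
    (fun R R' i => Layout.shareAttendedSet_of_fools (hL i) R R') (by simpa using hA) fun R i => ?_
  let x : Fin (k + 1) → ZMod m := Fin.snoc (fun p => (L.pre R p : ZMod m)) (-(target P N i))
  have hx : ∀ p : Fin k, x p.castSucc = L.pre R p :=
    fun p => Fin.snoc_castSucc (α := fun _ => ZMod m) ..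
  have hlast : x (Fin.last k) = -(target P N i : ZMod m) := Fin.snoc_last (α := fun _ => ZMod m) ..
  have hanswer :=
    (exists_add_add_eq_zero_iff hm L.w_lt (Layout.isLayoutValue_pre R ·) hx hlast).trans
      (L.exists_add_eq_target_iff R i)
  have := hM x
  simp only [hanswer] at this
  simpa only [List.ofFn_succ', List.concat_eq_append, hx, hlast] using this

theorem eventually_three_mul_lt {a b : ℕ → ℕ} (hb1 : ∀ n, 1 ≤ b n)
    (hbo : (fun n : ℕ => (b n : ℝ)) =o[atTop] fun n : ℕ => (n : ℝ))
    (hao : (fun n : ℕ => (a n : ℝ)) =o[atTop] fun n : ℕ => (n : ℝ) / (b n : ℝ)) :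
    ∀ᶠ n in atTop, 3 * ((a n + 1) * (b n + 2)) < n := by
  filter_upwards [hbo.bound (c := 1 / 30) (by norm_num), hao.bound (c := 1 / 30) (by norm_num),
    eventually_ge_atTop 60] with n hb ha hn
  have hbpos : (0 : ℝ) < b n := by exact_mod_cast hb1 n
  simp only [Real.norm_natCast, norm_div] at hb ha
  have hb30 : 30 * b n ≤ n := by exact_mod_cast (by linarith : 30 * (b n : ℝ) ≤ n)
  have hab30 : 30 * (a n * b n) ≤ n := by
    have := mul_le_mul_of_nonneg_right ha hbpos.le
    rw [mul_assoc, div_mul_cancel₀ _ hbpos.ne'] at this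
    exact_mod_cast (by linarith : 30 * ((a n : ℝ) * b n) ≤ n)
  have ha_le : a n ≤ a n * b n := Nat.le_mul_of_pos_right _ (hb1 n)
  have : (a n + 1) * (b n + 2) = a n * b n + 2 * a n + b n + 2 := by ring
  omega

theorem six_mul_le_sq_of_three_mul_lt {N B n : ℕ} (hN : 1 ≤ N) (h : 3 * (N * (B + 2)) < n) :
    6 * ((N * (B + 1) + 1) * (N + 1)) ≤ n ^ 2 := by
  set X := N * (B + 2)
  have hPX : N * (B + 1) + 1 ≤ X := by simp only [X]; nlinarith
  have hNX : N + 1 ≤ X := by simp only [X]; nlinarith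
  calc 6 * ((N * (B + 1) + 1) * (N + 1)) ≤ 6 * (X * X) := by gcongr
    _ ≤ (3 * X) ^ 2 := by nlinarith
    _ ≤ n ^ 2 := Nat.pow_le_pow_left h.le 2

/-- **Match3ₙ is BAPO-hard.** Fix a function `b : ℕ → ℕ` with `b(n) ≥ 1` and
`b(n) = o(n)`, and a function `a : ℕ → ℕ` with `a(n) = o(n / b(n))`. Then for all
sufficiently large `n`, there is no `(a(n), b(n))`-BAPO solving `Match3` over
`(ℤ/n²)^n`: outputting whether there exist `i, j` with
`x_last + x_i + x_j ≡ 0 (mod n²)`. -/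
theorem match3_hard (b : ℕ → ℕ) (hb1 : ∀ n, 1 ≤ b n)
    (hbo : (fun n : ℕ => (b n : ℝ)) =o[atTop] fun n : ℕ => (n : ℝ))
    (a : ℕ → ℕ)
    (hao : (fun n : ℕ => (a n : ℝ)) =o[atTop] fun n : ℕ => (n : ℝ) / (b n : ℝ)) :
    ∀ᶠ n in atTop, ∀ hn : 0 < n,
      ¬ ∃ M : BAPO (ZMod (n ^ 2)) Bool (a n) (b n),
        ∀ x : Fin n → ZMod (n ^ 2),
          M.SolvesOn (List.ofFn x)
            (decide (∃ i j : Fin n,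
              x ⟨n - 1, Nat.sub_lt hn Nat.one_pos⟩ + x i + x j = 0)) := by
  filter_upwards [eventually_three_mul_lt hb1 hbo hao] with n hn hn0
  rintro ⟨M, hM⟩
  obtain ⟨k, rfl⟩ := Nat.exists_eq_add_one.mpr hn0
  exact M.not_solvesOn_match3 (N := a (k + 1) + 1) (lt_add_one _) (by omega) (lt_add_one _)
    (six_mul_le_sq_of_three_mul_lt (Nat.le_add_left 1 _) hn) hM
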